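/- With c = π/√6, the value of the entropy functional 𝒱_{η_𝒴} along the Vershik curve equals π·√(2/3); explicitly, ∫_0^∞ ( c·x·e^{-cx}/(1 - e^{-cx}) - ln(1 - e^{-cx}) ) dx = π·√(2/3). -/

import Mathlib

open MeasureTheory Real Set

/-!
Write `t = e^{-cx}`. Expanding `t/(1-t)` geometrically and `-log(1-t)` by its power series,
the integrand is `∑_{n≥1} (c x tⁿ + tⁿ/n)`, a series of nonnegative terms that may be integrated
termwise. Both parts of the `n`-th term integrate to `1/(c n²)`, so the integral is
`2 ζ(2)/c = π²/(3c)`, which is `π √(2/3)` for `c = π/√6`.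
-/

theorem integral_eq_of_hasSum_of_nonneg {α : Type*} [MeasurableSpace α] {μ : Measure α}
    {F : ℕ → α → ℝ} {f : α → ℝ} {S : ℝ} (hF_int : ∀ n, Integrable (F n) μ)
    (hF_nonneg : ∀ n, 0 ≤ᵐ[μ] F n) (hS : HasSum (fun n ↦ ∫ a, F n a ∂μ) S)
    (hf : ∀ᵐ a ∂μ, HasSum (F · a) (f a)) :
    ∫ a, f a ∂μ = S := by
  have h_norm : ∀ n, ∫ a, ‖F n a‖ ∂μ = ∫ a, F n a ∂μ := fun n ↦
    integral_congr_ae <| (hF_nonneg n).mono fun a ha ↦ Real.norm_of_nonneg ha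
  have h_int := hasSum_integral_of_summable_integral_norm hF_int
    (by simpa only [h_norm] using hS.summable)
  rw [integral_congr_ae (hf.mono fun a ha ↦ ha.tsum_eq.symm)]
  exact h_int.unique hS

theorem hasSum_mul_pow_add_pow_div {t : ℝ} (ht : |t| < 1) (a : ℝ) :
    HasSum (fun n : ℕ ↦ a * t ^ (n + 1) + t ^ (n + 1) / (n + 1))
      (a * t / (1 - t) - log (1 - t)) := by
  have h_geom : HasSum (fun n : ℕ ↦ a * t ^ (n + 1)) (a * t / (1 - t)) := by
    convert! (hasSum_geometric_of_abs_lt_one ht).mul_left (a * t) using 1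
    ext n; ring
  simpa only [sub_eq_add_neg] using h_geom.add (hasSum_pow_div_log_of_abs_lt_one ht)

theorem integrableOn_mul_exp_neg_mul_Ioi {r : ℝ} (hr : 0 < r) :
    IntegrableOn (fun x : ℝ ↦ x * exp (-r * x)) (Ioi 0) := by
  simpa using integrableOn_rpow_mul_exp_neg_mul_rpow (p := 1) (s := 1) (by norm_num) one_pos hr

theorem integral_mul_exp_neg_mul_Ioi {r : ℝ} (hr : 0 < r) :
    ∫ x in Ioi (0 : ℝ), x * exp (-r * x) = 1 / r ^ 2 := by
  have h := integral_rpow_mul_exp_neg_mul_Ioi (a := 2) two_pos hr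
  norm_num [neg_mul] at h
  simpa using h

theorem integral_exp_neg_mul_Ioi {r : ℝ} (hr : 0 < r) :
    ∫ x in Ioi (0 : ℝ), exp (-r * x) = 1 / r := by
  simpa [neg_div_neg_eq] using integral_exp_mul_Ioi (neg_neg_of_pos hr) 0

theorem hasSum_two_div_mul_sq (c : ℝ) :
    HasSum (fun n : ℕ ↦ 2 / (c * (n + 1) ^ 2)) (π ^ 2 / (3 * c)) := by
  have h_zeta : HasSum (fun n : ℕ ↦ 1 / ((n : ℝ) + 1) ^ 2) (π ^ 2 / 6) := by
    simpa using (hasSum_nat_add_iff' 1).mpr hasSum_zeta_two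
  convert! h_zeta.mul_left (2 / c) using 1
  · ext n; rw [div_mul_div_comm, mul_one]
  · ring

noncomputable def vershikTerm (c : ℝ) (n : ℕ) (x : ℝ) : ℝ :=
  c * x * exp (-((n + 1) * c) * x) + exp (-((n + 1) * c) * x) / (n + 1)

theorem hasSum_vershikTerm {c x : ℝ} (hc : 0 < c) (hx : 0 < x) :
    HasSum (vershikTerm c · x)
      (c * x * exp (-c * x) / (1 - exp (-c * x)) - log (1 - exp (-c * x))) := by
  have ht : |exp (-c * x)| < 1 := by
    rw [abs_of_pos (exp_pos _), exp_lt_one_iff]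
    nlinarith
  convert! hasSum_mul_pow_add_pow_div ht (c * x) using 1
  ext n
  rw [vershikTerm, ← exp_nat_mul]
  push_cast
  ring_nf

theorem integral_vershikTerm {c : ℝ} (hc : 0 < c) (n : ℕ) :
    ∫ x in Ioi (0 : ℝ), vershikTerm c n x = 2 / (c * (n + 1) ^ 2) := by
  have hr : 0 < (n + 1) * c := by positivity
  simp only [vershikTerm, mul_assoc c]
  rw [integral_add ((integrableOn_mul_exp_neg_mul_Ioi hr).const_mul c)
      ((exp_neg_integrableOn_Ioi 0 hr).div_const _),
    integral_const_mul, integral_div, integral_mul_exp_neg_mul_Ioi hr, integral_exp_neg_mul_Ioi hr]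
  field_simp
  ring

theorem integrableOn_vershikTerm {c : ℝ} (hc : 0 < c) (n : ℕ) :
    IntegrableOn (vershikTerm c n) (Ioi 0) := by
  have hr : 0 < (n + 1) * c := by positivity
  have h_eq : vershikTerm c n = fun x ↦
      c * (x * exp (-((n + 1) * c) * x)) + exp (-((n + 1) * c) * x) / (n + 1) := by
    ext x; simp only [vershikTerm, mul_assoc]
  rw [h_eq]
  exact ((integrableOn_mul_exp_neg_mul_Ioi hr).const_mul c).add
    ((exp_neg_integrableOn_Ioi 0 hr).div_const _)

theorem integral_vershik_integrand {c : ℝ} (hc : 0 < c) :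
    ∫ x in Ioi (0 : ℝ), (c * x * exp (-c * x) / (1 - exp (-c * x)) - log (1 - exp (-c * x))) =
      π ^ 2 / (3 * c) := by
  refine integral_eq_of_hasSum_of_nonneg (integrableOn_vershikTerm hc) (fun n ↦ ?_)
    (by simpa only [integral_vershikTerm hc] using hasSum_two_div_mul_sq c)
    ((ae_restrict_mem measurableSet_Ioi).mono fun x hx ↦ hasSum_vershikTerm hc hx)
  filter_upwards [ae_restrict_mem measurableSet_Ioi] with x (hx : 0 < x)
  unfold vershikTerm
  positivity

/-- **Entropy of the Vershik curve.** With `c = π/√6`, the entropy functional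
`𝒱_{η_𝒴}` evaluated along the Vershik curve `e^{-cx} + e^{-cy} = 1` equals
`π·√(2/3)`:
`∫_0^∞ ( c·x·e^{-cx}/(1 - e^{-cx}) - ln(1 - e^{-cx}) ) dx = π·√(2/3)`. -/
theorem entropy_of_vershik_curve :
    (∫ x in Set.Ioi (0 : ℝ),
        ((Real.pi / Real.sqrt 6) * x * Real.exp (-(Real.pi / Real.sqrt 6) * x) /
            (1 - Real.exp (-(Real.pi / Real.sqrt 6) * x)) -
          Real.log (1 - Real.exp (-(Real.pi / Real.sqrt 6) * x)))) =
      Real.pi * Real.sqrt (2 / 3) := by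
  rw [integral_vershik_integrand (by positivity)]
  have h_sqrt : √(2 / 3) = √6 / 3 := by
    rw [show (2 / 3 : ℝ) = 6 / 3 ^ 2 by norm_num, sqrt_div' _ (by positivity), sqrt_sq three_pos.le]
  rw [h_sqrt]
  field_simp
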